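/- For 0 < λ < μ < 1, the sum ∑_{x=1}^∞ x·P_A(x), where P_A(x) = μ[ (μ−λ)ρ^{x−1}/(λ(1−μ)) + μ(1−x)(1−μ)^{x−2} + λ(1−λ)^{x−1}/(μ−λ) + (λ²(μ−2)+2λμ−μ²)(1−μ)^{x−2}/(λ(μ−λ)) ] with ρ = (1−μ)/(1−λ), equals (λ² − μ)/(λ(λ − μ)) = 1/λ + 1/μ + λ(1−μ)/(μ(μ−λ))... i.e., the mean PAoI of the FCFS Geo/Geo/1 queue equals (μ − λ²)/(λ(μ − λ)). -/

import Mathlib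

/-!
Writing `x = n + 1`, every term of `x · P_A(x)` is a combination of `(n + 1) q ^ n` and
`(n + 1) n q ^ n` for the three ratios `q = ρ, 1 - μ, 1 - λ`, whose sums are
`1 / (1 - q) ^ 2` and `2 q / (1 - q) ^ 3`; the mean is then a rational identity in `λ, μ`.
-/

section MulGeometric

variable {𝕜 : Type*} [NormedField 𝕜] {q : 𝕜}

theorem hasSum_succ_mul_geometric (hq : ‖q‖ < 1) :
    HasSum (fun n : ℕ ↦ ((n : 𝕜) + 1) * q ^ n) (1 / (1 - q) ^ 2) := by
  simpa [Nat.choose_one_right] using hasSum_choose_mul_geometric_of_norm_lt_one 1 hq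

theorem hasSum_succ_mul_mul_geometric (hq : ‖q‖ < 1) :
    HasSum (fun n : ℕ ↦ ((n : 𝕜) + 1) * n * q ^ n) (2 * q / (1 - q) ^ 3) := by
  have hq1 : 1 - q ≠ 0 := sub_ne_zero.2 fun h ↦ by simp [← h] at hq
  have hsum : 2 * q / (1 - q) ^ 3 = 2 * (1 / (1 - q) ^ (2 + 1)) - 2 * (1 / (1 - q) ^ 2) := by
    field_simp
    ring
  rw [hsum]
  -- `(n + 1) n = 2 (n + 2 choose 2) - 2 (n + 1)`
  refine (((hasSum_choose_mul_geometric_of_norm_lt_one 2 hq).mul_left 2).sub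
    ((hasSum_succ_mul_geometric hq).mul_left 2)).congr_fun fun n ↦ ?_
  have hchoose : ((n + 2).choose 2 : 𝕜) * 2 = (n + 2) * (n + 1) := by
    simpa [add_assoc, one_add_one_eq_two] using
      congrArg (Nat.cast : ℕ → 𝕜) (Nat.add_one_mul_choose_eq (n + 1) 1).symm
  linear_combination -q ^ n * hchoose

end MulGeometric

/-- The pmf `P_A(x)` of Eq. (17), with `l = λ`, `m = μ`, `r = ρ`; exponents are integers since
`(1 - μ) ^ (x - 2)` occurs at `x = 1`. -/
noncomputable def peakAoIPmf (l m r : ℝ) (x : ℕ) : ℝ :=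
  m * ((m - l) * r ^ ((x : ℤ) - 1) / (l * (1 - m))
    + m * (1 - (x : ℝ)) * (1 - m) ^ ((x : ℤ) - 2)
    + l * (1 - l) ^ ((x : ℤ) - 1) / (m - l)
    + (l ^ 2 * (m - 2) + 2 * l * m - m ^ 2) * (1 - m) ^ ((x : ℤ) - 2) / (l * (m - l)))

theorem peakAoIPmf_succ {l m : ℝ} (hm : 1 - m ≠ 0) (r : ℝ) (n : ℕ) :
    peakAoIPmf l m r (n + 1) = m * ((m - l) / (l * (1 - m)) * r ^ n
      - m / (1 - m) * (n * (1 - m) ^ n)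
      + l / (m - l) * (1 - l) ^ n
      + (l ^ 2 * (m - 2) + 2 * l * m - m ^ 2) / (l * (m - l)) / (1 - m) * (1 - m) ^ n) := by
  have h1 : ((n + 1 : ℕ) : ℤ) - 1 = n := by push_cast; ring
  have h2 : ((n + 1 : ℕ) : ℤ) - 2 = n - 1 := by push_cast; ring
  rw [peakAoIPmf, h1, h2, zpow_sub₀ hm, zpow_natCast, zpow_natCast, zpow_natCast, zpow_one]
  push_cast
  ring

theorem hasSum_mul_peakAoIPmf_succ {l m : ℝ} (hl0 : 0 < l) (hlm : l < m) (hm1 : m < 1) :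
    HasSum (fun n : ℕ ↦ ((n : ℝ) + 1) * peakAoIPmf l m ((1 - m) / (1 - l)) (n + 1))
      ((m - l ^ 2) / (l * (m - l))) := by
  have hr : ‖(1 - m) / (1 - l)‖ < 1 := by
    rw [Real.norm_of_nonneg (div_nonneg (by linarith) (by linarith)), div_lt_one (by linarith)]
    linarith
  have hm : ‖1 - m‖ < 1 := by rw [Real.norm_of_nonneg (by linarith)]; linarith
  have hl : ‖1 - l‖ < 1 := by rw [Real.norm_of_nonneg (by linarith)]; linarith
  have hm0 : 1 - m ≠ 0 := by linarith
  set c := (l ^ 2 * (m - 2) + 2 * l * m - m ^ 2) / (l * (m - l)) / (1 - m)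
  have hsum := ((((hasSum_succ_mul_geometric hr).mul_left ((m - l) / (l * (1 - m)))).sub
    ((hasSum_succ_mul_mul_geometric hm).mul_left (m / (1 - m)))).add
    ((hasSum_succ_mul_geometric hl).mul_left (l / (m - l)))).add
    ((hasSum_succ_mul_geometric hm).mul_left c)
  have hmean : m * ((m - l) / (l * (1 - m)) * (1 / (1 - (1 - m) / (1 - l)) ^ 2)
      - m / (1 - m) * (2 * (1 - m) / (1 - (1 - m)) ^ 3) + l / (m - l) * (1 / (1 - (1 - l)) ^ 2)
      + c * (1 / (1 - (1 - m)) ^ 2)) = (m - l ^ 2) / (l * (m - l)) := by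
    have : m - l ≠ 0 := by linarith
    have : 1 - l ≠ 0 := by linarith
    have : m ≠ 0 := by linarith
    have : l ≠ 0 := by linarith
    have h1 : 1 - (1 - m) / (1 - l) = (m - l) / (1 - l) := by field_simp; ring
    rw [h1, sub_sub_cancel, sub_sub_cancel]
    simp only [c]
    field_simp
    ring
  rw [← hmean]
  refine (hsum.mul_left m).congr_fun fun n ↦ ?_
  rw [peakAoIPmf_succ hm0]
  ring

/-- For `0 < λ < μ < 1` and `ρ = (1−μ)/(1−λ)`, the mean of the stationary PAoI pmf of the
FCFS Geo/Geo/1 queue equals `(μ − λ²)/(λ(μ − λ))`. -/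
theorem fcfs_paoi_mean (l m : ℝ) (hl0 : 0 < l) (hlm : l < m) (hm1 : m < 1)
    (r : ℝ) (hr : r = (1 - m) / (1 - l)) :
    (∑' x : ℕ, (if x = 0 then (0 : ℝ) else (x : ℝ) *
      (m * ((m - l) * r ^ ((x : ℤ) - 1) / (l * (1 - m))
        + m * (1 - (x : ℝ)) * (1 - m) ^ ((x : ℤ) - 2)
        + l * (1 - l) ^ ((x : ℤ) - 1) / (m - l)
        + (l ^ 2 * (m - 2) + 2 * l * m - m ^ 2) * (1 - m) ^ ((x : ℤ) - 2)
            / (l * (m - l))))))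
    = (m - l ^ 2) / (l * (m - l)) := by
  change ∑' x : ℕ, (if x = 0 then 0 else (x : ℝ) * peakAoIPmf l m r x) = _
  subst hr
  refine ((hasSum_nat_add_iff' 1).1 ?_).tsum_eq
  simpa using hasSum_mul_peakAoIPmf_succ hl0 hlm hm1
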